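/- arXiv:2212.06935 — 2 statements merged into one kernel-verified Lean document; each statement's English description precedes it below -/
import Mathlib

section
/- Let D > 1 be a square-free integer with D ≡ 23 (mod 24). Then in the formal power series ring ℤ⟦q⟧ one has the congruence Σ_{m,n≥1} χ₋D(n)·χ₁₂(m)·p((Dm²+1)/24)·q^{mn} ≡ Σ_{m≥1, gcd(m,6)=1} χ₋₁₂(m)·m·a_f((Dm²+1)/24)·( Σ_{n≥1, gcd(n,D)=1} χ₋D(n)·q^{mn} ) (mod 4), i.e. corresponding coefficients agree modulo 4. (Note that when gcd(m,6) = 1 and D ≡ 23 (mod 24), the quantity (Dm²+1)/24 is a non-negative integer.) -/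
/-!
STATEMENT 1: Let D > 1 be a square-free integer with D ≡ 23 (mod 24).  Then in ℤ⟦q⟧,
`Σ_{m,n≥1} χ₋D(n)·χ₁₂(m)·p((Dm²+1)/24)·q^{mn}
   ≡ Σ_{m≥1, gcd(m,6)=1} χ₋₁₂(m)·m·a_f((Dm²+1)/24)·(Σ_{n≥1, gcd(n,D)=1} χ₋D(n)·q^{mn})
   (mod 4)`,
where `a_f(k)` is the k-th coefficient of Ramanujan's third order mock theta function
`f(q) = 1 + Σ_{k≥1} q^{k²} ∏_{j=1}^{k} (1+q^j)^{-2}`.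
-/

open PowerSeries

/-- The partition function value `p((D·m²+1)/24)`, with the convention that
`p(α) := 0` when `α = (D·m²+1)/24` is not a (non-negative) integer. -/
def pVal (D m : ℕ) : ℤ :=
  if 24 ∣ D * m ^ 2 + 1 then (Fintype.card (Nat.Partition ((D * m ^ 2 + 1) / 24)) : ℤ) else 0

/-- The Kronecker character `χ₋D` of discriminant `-D` for squarefree `D ≡ 23 (mod 24)`:
the completely multiplicative function whose value at an odd prime `ℓ ∤ D` is the
Legendre symbol `(-D/ℓ)`, whose value at primes `ℓ ∣ D` is `0`, and whose value at `2`
is `1` (as `-D ≡ 1 (mod 8)`).  Since `D` is odd and `-D ≡ 1 (mod 8)`, this is exactly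
Mathlib's `jacobiSym (-D) n` (whose factor at the prime `2` is the quadratic character
of `ZMod 2`, which takes the value `1` at the odd number `-D`). -/
def chiD (D : ℕ) (n : ℕ) : ℤ := jacobiSym (-(D : ℤ)) n

/-- The Kronecker character of discriminant 12: `χ₁₂(m) = 1` if `m ≡ ±1 (mod 12)`,
`χ₁₂(m) = -1` if `m ≡ ±5 (mod 12)`, and `χ₁₂(m) = 0` otherwise. -/
def chi12 (m : ℕ) : ℤ :=
  if m % 12 = 1 ∨ m % 12 = 11 then 1
  else if m % 12 = 5 ∨ m % 12 = 7 then -1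
  else 0

/-- The Kronecker character of discriminant -12: `χ₋₁₂(m) = 1` if `m ≡ 1, 7 (mod 12)`,
`χ₋₁₂(m) = -1` if `m ≡ 5, 11 (mod 12)`, and `χ₋₁₂(m) = 0` otherwise. -/
def chiNeg12 (m : ℕ) : ℤ :=
  if m % 12 = 1 ∨ m % 12 = 7 then 1
  else if m % 12 = 5 ∨ m % 12 = 11 then -1
  else 0

/-- The inverse `(1 + q^j)⁻¹ ∈ ℤ⟦q⟧` (for `j ≥ 1` the constant term is `1`, a unit). -/
noncomputable def onePlusXInv (j : ℕ) : PowerSeries ℤ :=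
  PowerSeries.invOfUnit (1 + PowerSeries.X ^ j) 1

/-- The `k`-th summand `q^{k²} ∏_{j=1}^{k} (1+q^j)^{-2}` of the mock theta function
`f(q)`; the `k = 0` summand is the leading term `1`. -/
noncomputable def mockThetaTerm (k : ℕ) : PowerSeries ℤ :=
  PowerSeries.X ^ (k ^ 2) * ∏ j ∈ Finset.Icc 1 k, (onePlusXInv j) ^ 2

/-- Ramanujan's third order mock theta function
`f(q) = 1 + Σ_{k≥1} q^{k²} ∏_{j=1}^{k}(1+q^j)^{-2} ∈ ℤ⟦q⟧`; the sum converges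
q-adically since the `k`-th summand lies in `q^{k²}·ℤ⟦q⟧`, so the `n`-th coefficient
is the (finite) sum of the `n`-th coefficients of the summands with `k ≤ n`. -/
noncomputable def mockThetaF : PowerSeries ℤ :=
  PowerSeries.mk fun n =>
    ∑ k ∈ Finset.range (n + 1), (PowerSeries.coeff n) (mockThetaTerm k)

/-- `a_f(n)`: the `n`-th Fourier coefficient of `f(q)`. -/
noncomputable def aF (n : ℕ) : ℤ := (PowerSeries.coeff n) mockThetaF

/-- `P(D;q) = Σ_{m,n≥1} χ₋D(n)·χ₁₂(m)·p((Dm²+1)/24)·q^{mn} ∈ ℤ⟦q⟧`: the coefficient of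
`q^N` is the sum over factorizations `N = m·n` with `m, n ≥ 1`. -/
noncomputable def PSeries (D : ℕ) : PowerSeries ℤ :=
  PowerSeries.mk fun N =>
    ∑ x ∈ Nat.divisorsAntidiagonal N, chiD D x.2 * chi12 x.1 * pVal D x.1

/-- `Σ_{m≥1, gcd(m,6)=1} χ₋₁₂(m)·m·a_f((Dm²+1)/24)·(Σ_{n≥1, gcd(n,D)=1} χ₋D(n)·q^{mn})`:
the coefficient of `q^N` is the sum over factorizations `N = m·n` with `m, n ≥ 1`,
`gcd(m,6) = 1` and `gcd(n,D) = 1`.  (When `gcd(m,6) = 1` and `D ≡ 23 (mod 24)`, the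
quantity `(D·m²+1)/24` is a non-negative integer, so natural division is exact.) -/
noncomputable def LSeries' (D : ℕ) : PowerSeries ℤ :=
  PowerSeries.mk fun N =>
    ∑ x ∈ Nat.divisorsAntidiagonal N,
      if Nat.gcd x.1 6 = 1 ∧ Nat.gcd x.2 D = 1 then
        chiNeg12 x.1 * (x.1 : ℤ) * aF ((D * x.1 ^ 2 + 1) / 24) * chiD D x.2
      else 0

/-! Modulo 4 we have `(1 + q^j)^{-2} ≡ (1 - q^j)^{-2}`, so `f(q) ≡ Σ_k q^{k²} / (q;q)_k²`, and by
Durfee's square decomposition this is the partition generating function `1 / (q;q)_∞`; hence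
`a_f(n) ≡ p(n) (mod 4)`. Together with `χ₁₂(m) ≡ m·χ₋₁₂(m) (mod 4)` and `χ₋D(n) = 0` unless
`gcd(n, D) = 1`, the two double sums agree term by term modulo 4. Durfee's identity is proved in the
finite form `Σ_k q^{k² + rk} [n, k]_q (q^{k+r+1}; q)_{n-k} = 1`, by induction on `n` for all `r`
simultaneously. -/

open Finset

theorem Finset.dvd_prod_sub_one {ι M : Type*} [CommRing M] {s : Finset ι} {f : ι → M} {a : M}
    (h : ∀ i ∈ s, a ∣ f i - 1) : a ∣ ∏ i ∈ s, f i - 1 := by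
  refine prod_induction f (fun x => a ∣ x - 1) (fun x y hx hy => ?_) (by simp) h
  have : x * y - 1 = x * (y - 1) + (x - 1) := by ring
  rw [this]
  exact dvd_add (dvd_mul_of_dvd_right hy x) hx

namespace PowerSeries

variable {R : Type*} [CommRing R]

theorem coeff_eq_of_X_pow_dvd_sub {n : ℕ} {f g : R⟦X⟧} (h : X ^ (n + 1) ∣ f - g) :
    coeff n f = coeff n g :=
  sub_eq_zero.mp <| by rw [← map_sub]; exact X_pow_dvd_iff.mp h n n.lt_succ_self

variable (R) in
noncomputable def qPochhammer (a m : ℕ) : R⟦X⟧ := ∏ i ∈ range m, (1 - X ^ (a + i + 1))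

variable (R) in
noncomputable def invQPochhammer (k : ℕ) : R⟦X⟧ := invOfUnit (qPochhammer R 0 k) 1

variable (R) in
/-- The Gaussian binomial coefficient `[n, k]_q = (q^{n-k+1}; q)_k / (q; q)_k`; for `k > n` the
numerator contains the factor `1 - q^0 = 0`. -/
noncomputable def gaussBinom (n k : ℕ) : R⟦X⟧ :=
  (∏ i ∈ range k, (1 - X ^ (n - i))) * invQPochhammer R k

variable (R) in
noncomputable def durfeeSum (n r : ℕ) : R⟦X⟧ :=
  ∑ k ∈ range (n + 1), X ^ (k ^ 2 + r * k) * gaussBinom R n k * qPochhammer R (k + r) (n - k)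

@[simp] theorem qPochhammer_zero_right (a : ℕ) : qPochhammer R a 0 = 1 := prod_range_zero _

theorem qPochhammer_succ (a m : ℕ) :
    qPochhammer R a (m + 1) = qPochhammer R a m * (1 - X ^ (a + m + 1)) :=
  prod_range_succ _ _

theorem qPochhammer_add (a m l : ℕ) :
    qPochhammer R a (m + l) = qPochhammer R a m * qPochhammer R (a + m) l := by
  simp only [qPochhammer, prod_range_add, add_assoc]

theorem qPochhammer_zero_eq_prod_Icc (k : ℕ) :
    qPochhammer R 0 k = ∏ j ∈ Icc 1 k, (1 - X ^ j) := by
  rw [← Ico_add_one_right_eq_Icc, prod_Ico_eq_prod_range, Nat.add_sub_cancel, qPochhammer]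
  simp [add_comm]

theorem qPochhammer_mul_invQPochhammer (k : ℕ) :
    qPochhammer R 0 k * invQPochhammer R k = 1 :=
  mul_invOfUnit _ _ <| by simp [qPochhammer, map_prod]

theorem qPochhammer_mul_invQPochhammer_of_le {k n : ℕ} (h : k ≤ n) :
    qPochhammer R k (n - k) * invQPochhammer R n = invQPochhammer R k := by
  have hsplit := qPochhammer_add (R := R) 0 k (n - k)
  rw [Nat.add_sub_cancel' h, zero_add] at hsplit
  calc qPochhammer R k (n - k) * invQPochhammer R n
      = (qPochhammer R 0 k * invQPochhammer R k) * qPochhammer R k (n - k) *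
          invQPochhammer R n := by rw [qPochhammer_mul_invQPochhammer, one_mul]
    _ = invQPochhammer R k * (qPochhammer R 0 n * invQPochhammer R n) := by rw [hsplit]; ring
    _ = invQPochhammer R k := by rw [qPochhammer_mul_invQPochhammer, mul_one]

theorem invQPochhammer_eq_mul_succ (k : ℕ) :
    invQPochhammer R k = (1 - X ^ (k + 1)) * invQPochhammer R (k + 1) := by
  simpa [qPochhammer] using (qPochhammer_mul_invQPochhammer_of_le (R := R) k.le_succ).symm

theorem gaussBinom_zero_right (n : ℕ) : gaussBinom R n 0 = 1 := by
  simpa [gaussBinom] using qPochhammer_mul_invQPochhammer (R := R) 0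

theorem gaussBinom_eq_zero_of_lt {n k : ℕ} (h : n < k) : gaussBinom R n k = 0 := by
  rw [gaussBinom, prod_eq_zero (mem_range.mpr h) (by simp), zero_mul]

theorem gaussBinom_succ_succ (n j : ℕ) :
    gaussBinom R (n + 1) (j + 1) = gaussBinom R n (j + 1) + X ^ (n - j) * gaussBinom R n j := by
  rcases lt_or_ge n j with hnj | hjn
  · simp [gaussBinom_eq_zero_of_lt, hnj, hnj.trans j.lt_succ_self]
  have hshift : ∏ i ∈ range (j + 1), (1 - (X : R⟦X⟧) ^ (n + 1 - i)) =
      (1 - X ^ (n + 1)) * ∏ i ∈ range j, (1 - X ^ (n - i)) := by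
    rw [prod_range_succ', mul_comm]
    simp [Nat.add_sub_add_right]
  have hX : (X : R⟦X⟧) ^ (n - j) * X ^ (j + 1) = X ^ (n + 1) := by
    rw [← pow_add]; congr 1; omega
  simp only [gaussBinom, hshift, prod_range_succ, invQPochhammer_eq_mul_succ (R := R) j]
  linear_combination
    (∏ i ∈ range j, (1 - (X : R⟦X⟧) ^ (n - i))) * invQPochhammer R (j + 1) * hX

theorem durfeeSum_summand_succ {n j : ℕ} (hj : j ≤ n) (r : ℕ) :
    X ^ ((j + 1) ^ 2 + r * (j + 1)) * gaussBinom R (n + 1) (j + 1) *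
        qPochhammer R (j + 1 + r) (n + 1 - (j + 1)) =
      (1 - X ^ (n + r + 1)) * (X ^ ((j + 1) ^ 2 + r * (j + 1)) * gaussBinom R n (j + 1) *
        qPochhammer R (j + 1 + r) (n - (j + 1))) +
      X ^ (n + r + 1) * (X ^ (j ^ 2 + (r + 1) * j) * gaussBinom R n j *
        qPochhammer R (j + (r + 1)) (n - j)) := by
  have hB : gaussBinom R n (j + 1) * qPochhammer R (j + 1 + r) (n - j) =
      gaussBinom R n (j + 1) * qPochhammer R (j + 1 + r) (n - (j + 1)) * (1 - X ^ (n + r + 1)) := by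
    rcases hj.lt_or_eq with hjn | rfl
    · obtain ⟨m, rfl⟩ := Nat.exists_eq_add_of_lt hjn
      rw [show j + m + 1 - j = m + 1 by omega, show j + m + 1 - (j + 1) = m by omega,
        qPochhammer_succ, show j + 1 + r + m + 1 = j + m + 1 + r + 1 by omega, mul_assoc]
    · simp [gaussBinom_eq_zero_of_lt]
  have hX : (X : R⟦X⟧) ^ ((j + 1) ^ 2 + r * (j + 1)) * X ^ (n - j) =
      X ^ (n + r + 1) * X ^ (j ^ 2 + (r + 1) * j) := by
    rw [← pow_add, ← pow_add]; congr 1; zify [hj]; ring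
  rw [gaussBinom_succ_succ, Nat.add_sub_add_right, show j + (r + 1) = j + 1 + r by ring]
  linear_combination X ^ ((j + 1) ^ 2 + r * (j + 1)) * hB +
    gaussBinom R n j * qPochhammer R (j + 1 + r) (n - j) * hX

theorem durfeeSum_succ (n r : ℕ) :
    durfeeSum R (n + 1) r =
      (1 - X ^ (n + r + 1)) * durfeeSum R n r + X ^ (n + r + 1) * durfeeSum R n (r + 1) := by
  have hzero (m : ℕ) : X ^ (0 ^ 2 + r * 0) * gaussBinom R m 0 * qPochhammer R (0 + r) (m - 0) =
      qPochhammer R r m := by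
    simp [gaussBinom_zero_right]
  have hshift : durfeeSum R n r = qPochhammer R r n + ∑ j ∈ range (n + 1),
      X ^ ((j + 1) ^ 2 + r * (j + 1)) * gaussBinom R n (j + 1) *
        qPochhammer R (j + 1 + r) (n - (j + 1)) := by
    rw [durfeeSum, sum_range_succ', hzero, add_comm, sum_range_succ,
      gaussBinom_eq_zero_of_lt n.lt_succ_self]
    simp
  rw [durfeeSum, sum_range_succ', hzero, qPochhammer_succ, sum_congr rfl fun j hj =>
    durfeeSum_summand_succ (Nat.lt_succ_iff.mp (mem_range.mp hj)) r, sum_add_distrib, ← mul_sum,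
    ← mul_sum, hshift, durfeeSum]
  ring

theorem durfeeSum_eq_one (n r : ℕ) : durfeeSum R n r = 1 := by
  induction n generalizing r with
  | zero => simp [durfeeSum, gaussBinom_zero_right]
  | succ n ih => rw [durfeeSum_succ, ih, ih]; ring

theorem coeff_invQPochhammer_self_eq_sum (n : ℕ) :
    coeff n (invQPochhammer R n) =
      ∑ k ∈ range (n + 1), coeff n (X ^ (k ^ 2) * invQPochhammer R k ^ 2) := by
  have hexpand : invQPochhammer R n = ∑ k ∈ range (n + 1),
      X ^ (k ^ 2) * (∏ i ∈ range k, (1 - X ^ (n - i))) * invQPochhammer R k ^ 2 := by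
    calc invQPochhammer R n = durfeeSum R n 0 * invQPochhammer R n := by
          rw [durfeeSum_eq_one, one_mul]
      _ = _ := by
          rw [durfeeSum, sum_mul]
          refine sum_congr rfl fun k hk => ?_
          have h := qPochhammer_mul_invQPochhammer_of_le (R := R)
            (Nat.lt_succ_iff.mp (mem_range.mp hk))
          simp only [gaussBinom, zero_mul, add_zero]
          linear_combination X ^ (k ^ 2) * (∏ i ∈ range k, (1 - (X : R⟦X⟧) ^ (n - i))) *
            invQPochhammer R k * h
  rw [hexpand, map_sum]
  refine sum_congr rfl fun k hk => coeff_eq_of_X_pow_dvd_sub ?_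
  have hkn : k ≤ n := Nat.lt_succ_iff.mp (mem_range.mp hk)
  have hnum : (X : R⟦X⟧) ^ (n - k + 1) ∣ ∏ i ∈ range k, (1 - X ^ (n - i)) - 1 :=
    dvd_prod_sub_one fun i hi => by
      rw [sub_sub_cancel_left, dvd_neg]
      exact pow_dvd_pow X (by have := mem_range.mp hi; omega)
  have hk : k ≤ k ^ 2 := Nat.le_self_pow two_ne_zero k
  calc (X : R⟦X⟧) ^ (n + 1) ∣ X ^ (k ^ 2) * X ^ (n - k + 1) := by
        rw [← pow_add]; exact pow_dvd_pow X (by omega)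
    _ ∣ X ^ (k ^ 2) * (∏ i ∈ range k, (1 - X ^ (n - i)) - 1) * invQPochhammer R k ^ 2 :=
        dvd_mul_of_dvd_left (mul_dvd_mul_left _ hnum) _
    _ = _ := by ring

open scoped WithPiTopology in
theorem coeff_invQPochhammer_self (n : ℕ) :
    coeff n (invQPochhammer R n) = Fintype.card (Nat.Partition n) := by
  -- Mathlib's product formula for the partition generating function converges coefficientwise;
  -- in the discrete topology on `R` the `n`-th coefficients of the partial products stabilise.
  let _ : TopologicalSpace R := ⊥
  have : DiscreteTopology R := ⟨rfl⟩
  set g : ℕ → R⟦X⟧ := fun i => ∑' j, X ^ ((i + 1) * j)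
  have hg (i : ℕ) : g i * (1 - X ^ (i + 1)) = 1 := by
    simpa [g, pow_mul] using
      WithPiTopology.tsum_pow_mul_one_sub_of_constantCoeff_eq_zero (f := (X : R⟦X⟧) ^ (i + 1))
        (by simp)
  have hprod : HasProd g (mk fun n => (Fintype.card (Nat.Partition n) : R)) := by
    simpa [Nat.Partition.restricted] using
      Nat.Partition.hasProd_powerSeriesMk_card_restricted R (fun _ => True)
  have hcoeff := ((WithPiTopology.continuous_coeff R n).tendsto _).comp hprod
  rw [nhds_discrete, Filter.tendsto_pure, coeff_mk] at hcoeff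
  obtain ⟨s, hs⟩ := Filter.eventually_atTop.mp hcoeff
  have hinv : ∏ i ∈ range n, g i = invQPochhammer R n :=
    left_inv_eq_right_inv (by
      rw [qPochhammer, ← prod_mul_distrib]
      exact prod_eq_one fun i _ => by rw [zero_add, hg])
      (qPochhammer_mul_invQPochhammer n)
  rw [← hs (range n ∪ s) subset_union_right, Function.comp_apply,
    ← prod_sdiff (subset_union_left (s₂ := s)), hinv]
  refine (coeff_eq_of_X_pow_dvd_sub ?_).symm
  rw [← sub_one_mul]
  refine dvd_mul_of_dvd_left (dvd_prod_sub_one fun i hi => ?_) _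
  have hgi : g i - 1 = X ^ (i + 1) * g i := by linear_combination hg i
  rw [hgi]
  exact dvd_mul_of_dvd_left (pow_dvd_pow X (by simp at hi; omega)) _

end PowerSeries

theorem one_sub_sq_eq_one_add_sq {A : Type*} [CommRing A] (h4 : (4 : A) = 0) (a : A) :
    (1 - a) ^ 2 = (1 + a) ^ 2 := by
  linear_combination (-a) * h4

theorem one_add_X_pow_mul_onePlusXInv {j : ℕ} (hj : j ≠ 0) : (1 + X ^ j) * onePlusXInv j = 1 :=
  mul_invOfUnit _ _ (by simp [zero_pow hj])

theorem map_mockThetaTerm {A : Type*} [CommRing A] (h4 : (4 : A) = 0) (k : ℕ) :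
    map (Int.castRingHom A) (mockThetaTerm k) = X ^ (k ^ 2) * invQPochhammer A k ^ 2 := by
  have h4X : (4 : A⟦X⟧) = 0 := by rw [← map_ofNat (C (R := A)) 4, h4, map_zero]
  rw [mockThetaTerm, map_mul, map_pow, map_X, map_prod]
  congr 1
  refine left_inv_eq_right_inv (a := qPochhammer A 0 k ^ 2) ?_
    (by rw [← mul_pow, qPochhammer_mul_invQPochhammer, one_pow])
  rw [qPochhammer_zero_eq_prod_Icc, ← prod_pow, ← prod_mul_distrib]
  refine prod_eq_one fun j hj => ?_
  have hinv := congrArg (map (Int.castRingHom A))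
    (one_add_X_pow_mul_onePlusXInv (j := j) (by simp at hj; omega))
  simp only [map_mul, map_add, map_one, map_pow, map_X] at hinv
  rw [map_pow, one_sub_sq_eq_one_add_sq h4X, ← mul_pow, mul_comm, hinv, one_pow]

theorem aF_modEq_card_partition (n : ℕ) : aF n ≡ Fintype.card (Nat.Partition n) [ZMOD 4] := by
  refine (ZMod.intCast_eq_intCast_iff _ _ 4).mp ?_
  calc ((aF n : ℤ) : ZMod 4)
      = ∑ k ∈ range (n + 1), coeff n (map (Int.castRingHom (ZMod 4)) (mockThetaTerm k)) := by
        simp [aF, mockThetaF, coeff_map]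
    _ = coeff n (invQPochhammer (ZMod 4) n) := by
        simp only [map_mockThetaTerm (show (4 : ZMod 4) = 0 from rfl),
          coeff_invQPochhammer_self_eq_sum]
    _ = _ := by rw [coeff_invQPochhammer_self]; push_cast; rfl

theorem coprime_six_iff {m : ℕ} : m.Coprime 6 ↔ ¬ 2 ∣ m ∧ ¬ 3 ∣ m := by
  rw [show 6 = 2 * 3 from rfl, Nat.coprime_mul_iff_right, Nat.coprime_comm,
    Nat.prime_two.coprime_iff_not_dvd, Nat.coprime_comm, Nat.prime_three.coprime_iff_not_dvd]

theorem dvd_mul_sq_add_one_of_coprime_six {D m : ℕ} (hD : D % 24 = 23) (hm : m.Coprime 6) :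
    24 ∣ D * m ^ 2 + 1 := by
  rw [coprime_six_iff] at hm
  have hr : m % 24 < 24 := Nat.mod_lt m (by norm_num)
  have hr2 : m % 24 % 2 = 1 := by omega
  have hr3 : m % 24 % 3 ≠ 0 := by omega
  rw [Nat.dvd_iff_mod_eq_zero, Nat.add_mod, Nat.mul_mod, hD, Nat.pow_mod]
  interval_cases m % 24 <;> omega

theorem chi12_eq_zero_of_not_coprime {m : ℕ} (h : ¬ m.Coprime 6) : chi12 m = 0 := by
  rw [coprime_six_iff] at h
  unfold chi12
  split_ifs <;> omega

theorem chi12_modEq_chiNeg12_mul (m : ℕ) : chi12 m ≡ chiNeg12 m * m [ZMOD 4] := by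
  unfold chi12 chiNeg12 Int.ModEq
  split_ifs <;> omega

theorem chiD_eq_zero_of_not_coprime {D n : ℕ} (hn : n ≠ 0) (h : ¬ n.Coprime D) : chiD D n = 0 :=
  jacobiSym.eq_zero_iff.mpr ⟨hn, by rwa [Int.neg_gcd, Int.gcd_natCast_natCast, Nat.gcd_comm]⟩

theorem PSeries_summand_modEq {D m : ℕ} (hD : D % 24 = 23) (hm : m.Coprime 6) (n : ℕ) :
    chiD D n * chi12 m * pVal D m ≡
      chiNeg12 m * m * aF ((D * m ^ 2 + 1) / 24) * chiD D n [ZMOD 4] := by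
  rw [pVal, if_pos (dvd_mul_sq_add_one_of_coprime_six hD hm)]
  calc chiD D n * chi12 m * Fintype.card (Nat.Partition ((D * m ^ 2 + 1) / 24))
      ≡ chiD D n * (chiNeg12 m * m) * aF ((D * m ^ 2 + 1) / 24) [ZMOD 4] :=
        ((chi12_modEq_chiNeg12_mul m).mul_left _).mul (aF_modEq_card_partition _).symm
    _ = _ := by ring

theorem PSeries_congruent_logDeriv_mod_four_general (D : ℕ) (h23 : D % 24 = 23) :
    ∀ N : ℕ, (PowerSeries.coeff N) (PSeries D) ≡
      (PowerSeries.coeff N) (LSeries' D) [ZMOD 4] := by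
  intro N
  rw [PSeries, LSeries', coeff_mk, coeff_mk]
  refine Int.ModEq.sum fun x hx => ?_
  split_ifs with h
  · exact PSeries_summand_modEq h23 h.1 x.2
  · rcases not_and_or.mp h with hm | hn
    · rw [chi12_eq_zero_of_not_coprime hm, mul_zero, zero_mul]
    · rw [chiD_eq_zero_of_not_coprime (Nat.ne_zero_of_mem_divisorsAntidiagonal hx).2 hn,
        zero_mul, zero_mul]

theorem PSeries_congruent_logDeriv_mod_four (D : ℕ) (hD : 1 < D) (hsf : Squarefree D)
    (h23 : D % 24 = 23) :
    ∀ N : ℕ, (PowerSeries.coeff N) (PSeries D) ≡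
      (PowerSeries.coeff N) (LSeries' D) [ZMOD 4] :=
  PSeries_congruent_logDeriv_mod_four_general D h23
end

section
/- In the formal power series ring ℤ⟦q⟧ one has the identity Σ_{n≥0} p(n) q^n = 1 + Σ_{m≥1} q^{m²}·∏_{k=1}^{m}(1−q^k)^{−2}, where the sum over m converges in the q-adic topology (the m-th summand lies in q^{m²}·ℤ⟦q⟧). -/
/-!
STATEMENT 3: In ℤ⟦q⟧ one has the identity
`Σ_{n≥0} p(n) qⁿ = 1 + Σ_{m≥1} q^{m²} ∏_{k=1}^{m} (1-q^k)^{-2}`,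
where the sum over `m` converges in the q-adic topology: the `m`-th summand lies in
`q^{m²}·ℤ⟦q⟧`.  We formalize the q-adically convergent sum coefficientwise: the
`n`-th coefficient of the right-hand side is the (finite) sum of the `n`-th
coefficients of the summands with `m ≤ n` (the `m = 0` summand being the leading
term `1`), and we record that the `m`-th summand indeed lies in `q^{m²}·ℤ⟦q⟧`.
-/

open PowerSeries

/-- The partition generating function `Σ_{n≥0} p(n) qⁿ ∈ ℤ⟦q⟧`. -/
noncomputable def partitionGF : PowerSeries ℤ :=
  PowerSeries.mk fun n => (Fintype.card (Nat.Partition n) : ℤ)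

/-- The inverse `(1 - q^k)⁻¹ ∈ ℤ⟦q⟧` (for `k ≥ 1` the constant term is `1`, a unit). -/
noncomputable def oneMinusXInv (k : ℕ) : PowerSeries ℤ :=
  PowerSeries.invOfUnit (1 - PowerSeries.X ^ k) 1

/-- The `m`-th summand `q^{m²} ∏_{k=1}^{m} (1-q^k)^{-2}`; for `m = 0` this is `1`. -/
noncomputable def durfeeTerm (m : ℕ) : PowerSeries ℤ :=
  PowerSeries.X ^ (m ^ 2) * ∏ k ∈ Finset.Icc 1 m, (oneMinusXInv k) ^ 2

/-!
The Durfee square of a partition is the largest `m × m` square in its Young diagram. Removing it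
leaves the rows below it, a partition with parts `≤ m`, and the part to its right, whose conjugate
has parts `≤ m`; conversely every such pair glues back along the square. As
`∏_{k=1}^{m} (1-q^k)⁻¹` generates the partitions with parts `≤ m`, the `m`-th summand generates the
partitions whose Durfee square has side `m`. A partition is handled through the counts
`v ↦ #{parts ≥ v}` (its conjugate), which determine it and turn conjugation into counting.
-/

open Finset

namespace Multiset

/-- For `v ≥ 1`, the `v`-th part of the conjugate partition. -/
def countGE (M : Multiset ℕ) (v : ℕ) : ℕ := M.countP (v ≤ ·)

variable {M N : Multiset ℕ} {m v : ℕ}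

theorem countGE_antitone (M : Multiset ℕ) : Antitone M.countGE := fun _ _ h ↦ by
  simp only [countGE, countP_eq_card_filter]
  exact card_le_card (monotone_filter_right M fun _ hx ↦ h.trans hx)

theorem countGE_add (M N : Multiset ℕ) (v : ℕ) :
    (M + N).countGE v = M.countGE v + N.countGE v :=
  countP_add _ _ _

theorem countGE_eq_countGE_succ_add_count (M : Multiset ℕ) (v : ℕ) :
    M.countGE v = M.countGE (v + 1) + M.count v := by
  rw [countGE, countP_eq_countP_filter_add _ _ (v + 1 ≤ ·), countP_filter, countP_filter]
  congr 1 <;> exact countP_congr rfl fun x _ ↦ by grind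

theorem countGE_eq_zero (h : ∀ x ∈ M, x < v) : M.countGE v = 0 :=
  countP_eq_zero.2 fun x hx ↦ not_le.2 (h x hx)

theorem countGE_map_Icc (f : ℕ → ℕ) (K v : ℕ) :
    ((Finset.Icc 1 K).val.map f).countGE v = #{j ∈ Finset.Icc 1 K | v ≤ f j} := by
  rw [countGE, countP_map]
  rfl

theorem countGE_filter_pos (M : Multiset ℕ) (hv : 1 ≤ v) :
    (M.filter (0 < ·)).countGE v = M.countGE v := by
  rw [countGE, countP_filter]
  exact countP_congr rfl fun x _ ↦ by grind

theorem countGE_replicate (c a v : ℕ) :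
    (replicate c a).countGE v = if v ≤ a then c else 0 := by
  rw [countGE, ← coe_replicate, coe_countP, List.countP_replicate]
  simp

theorem countGE_filter_lt (M : Multiset ℕ) (hv : v ≤ m) :
    (M.filter (· < m)).countGE v = M.countGE v - M.countGE m := by
  have hsplit : M.countGE v = M.countGE m + (M.filter (· < m)).countGE v := by
    unfold countGE
    rw [countP_eq_countP_filter_add M (v ≤ ·) (m ≤ ·), countP_filter, countP_filter, countP_filter]
    congr 1 <;> exact countP_congr rfl fun x _ ↦ by grind
  omega

theorem eq_of_countGE_eq (hM : 0 ∉ M) (hN : 0 ∉ N)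
    (h : ∀ v, 1 ≤ v → M.countGE v = N.countGE v) : M = N := by
  ext a
  rcases Nat.eq_zero_or_pos a with rfl | ha
  · rw [count_eq_zero_of_notMem hM, count_eq_zero_of_notMem hN]
  · have := countGE_eq_countGE_succ_add_count M a
    have := countGE_eq_countGE_succ_add_count N a
    have := h a ha
    have := h (a + 1) (by omega)
    omega

theorem sum_countGE {K : ℕ} (h : ∀ x ∈ M, x ≤ K) :
    ∑ i ∈ Finset.Icc 1 K, M.countGE i = M.sum := by
  induction M using Multiset.induction with
  | empty => simp [countGE]
  | cons a M ih =>
    have hfilter : {i ∈ Finset.Icc 1 K | i ≤ a} = Finset.Icc 1 a := by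
      ext i
      have := h a (mem_cons_self a M)
      simp only [Finset.mem_filter, Finset.mem_Icc]
      omega
    simp only [countGE, countP_cons, Finset.sum_add_distrib] at ih ⊢
    rw [ih fun x hx ↦ h x (mem_cons_of_mem hx), Finset.sum_boole, hfilter, Nat.card_Icc, sum_cons,
      Nat.cast_id, Nat.add_sub_cancel, add_comm]

theorem filter_ne_zero_eq_self (h0 : 0 ∉ M) : M.filter (· ≠ 0) = M :=
  filter_eq_self.2 fun _ hx h ↦ h0 (h ▸ hx)

end Multiset

theorem Nat.Partition.zero_notMem_parts {n : ℕ} (P : n.Partition) : 0 ∉ P.parts :=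
  fun h ↦ (P.parts_pos h).false

theorem Nat.Partition.sigma_ext {x y : Σ ab : ℕ × ℕ, ab.1.Partition × ab.2.Partition}
    (h₁ : x.2.1.parts = y.2.1.parts) (h₂ : x.2.2.parts = y.2.2.parts) : x = y := by
  obtain ⟨⟨a, b⟩, B, R⟩ := x
  obtain ⟨⟨a', b'⟩, B', R'⟩ := y
  dsimp only at h₁ h₂
  obtain rfl : a = a' := B.parts_sum.symm.trans (h₁ ▸ B'.parts_sum)
  obtain rfl : b = b' := R.parts_sum.symm.trans (h₂ ▸ R'.parts_sum)
  rw [Nat.Partition.ext h₁, Nat.Partition.ext h₂]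

namespace DurfeeSquare

open Multiset (countGE countGE_antitone countGE_add)
open Nat.Partition

/-- If `f 1 ≥ f 2 ≥ …` are the parts of a partition with at most `K` parts, then
`conjugate K f 1 ≥ conjugate K f 2 ≥ …` are the parts of its conjugate. -/
def conjugate (K : ℕ) (f : ℕ → ℕ) (i : ℕ) : ℕ := #{k ∈ Icc 1 K | i ≤ f k}

variable {f : ℕ → ℕ} {K m d i j v x : ℕ} {M B R : Multiset ℕ}

theorem conjugate_le (K : ℕ) (f : ℕ → ℕ) (i : ℕ) : conjugate K f i ≤ K :=
  (card_filter_le _ _).trans (by simp)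

theorem conjugate_congr {g : ℕ → ℕ} (h : ∀ k ∈ Icc 1 K, f k = g k) :
    conjugate K f = conjugate K g := by
  ext i
  exact congrArg card (filter_congr fun k hk ↦ by rw [h k hk])

theorem le_conjugate_iff (hf : Antitone f) (hj : j ∈ Icc 1 K) :
    j ≤ conjugate K f i ↔ i ≤ f j := by
  rw [mem_Icc] at hj
  constructor
  · intro h
    by_contra! hlt
    have hsub : {k ∈ Icc 1 K | i ≤ f k} ⊆ Icc 1 (j - 1) := fun k hk ↦ by
      rw [mem_filter, mem_Icc] at hk
      have : ¬j ≤ k := fun hjk ↦ (hf hjk).not_gt (hlt.trans_le hk.2)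
      grind
    have := card_le_card hsub
    simp only [Nat.card_Icc, conjugate] at this h
    omega
  · intro h
    have hsub : Icc 1 j ⊆ {k ∈ Icc 1 K | i ≤ f k} := fun k hk ↦ by
      rw [mem_Icc] at hk
      exact mem_filter.2 ⟨mem_Icc.2 ⟨hk.1, hk.2.trans hj.2⟩, h.trans (hf hk.2)⟩
    simpa [conjugate] using card_le_card hsub

theorem conjugate_conjugate (hf : Antitone f) (hm : f 1 ≤ m) (hK : ∀ j, K < j → f j = 0)
    (hv : 1 ≤ v) : conjugate m (conjugate K f) v = f v := by
  by_cases hvK : v ≤ K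
  · have hfilter : {i ∈ Icc 1 m | v ≤ conjugate K f i} = Icc 1 (f v) := by
      ext i
      simp only [mem_filter, mem_Icc]
      rw [le_conjugate_iff hf (mem_Icc.2 ⟨hv, hvK⟩)]
      have := hf hv
      omega
    rw [conjugate, hfilter, Nat.card_Icc, Nat.add_sub_cancel]
  · have hempty : {i ∈ Icc 1 m | v ≤ conjugate K f i} = ∅ :=
      filter_false_of_mem fun i _ ↦ by have := conjugate_le K f i; omega
    rw [conjugate, hempty, card_empty, hK v (by omega)]

def size (M : Multiset ℕ) : ℕ := Nat.findGreatest (fun i ↦ i ≤ M.countGE i) (Multiset.card M)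

/-- The first `m` rows of a partition with Durfee square of size `m`, where `R` is the conjugate
of the part to the right of the square. -/
def topRows (m : ℕ) (R : Multiset ℕ) : Multiset ℕ := (Icc 1 m).val.map fun i ↦ m + R.countGE i

/-- The rows below a square of size `m`: the parts `< m`, and the parts `≥ m` beyond the first
`m` (these are all equal to `m` when `m` is the Durfee size). -/
def below (m : ℕ) (M : Multiset ℕ) : Multiset ℕ :=
  M.filter (· < m) + Multiset.replicate (M.countGE m - m) m

/-- The conjugate of the part to the right of a square of size `m`, i.e. the nonzero column
lengths beyond column `m`; `M.sum` bounds the number of columns. -/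
def rightConj (m : ℕ) (M : Multiset ℕ) : Multiset ℕ :=
  ((Icc 1 M.sum).val.map fun k ↦ M.countGE (m + k)).filter (0 < ·)

theorem size_eq_iff : size M = m ↔ m ≤ M.countGE m ∧ M.countGE (m + 1) ≤ m := by
  rw [size, Nat.findGreatest_eq_iff]
  constructor
  · rintro ⟨-, hPm, hgt⟩
    refine ⟨?_, ?_⟩
    · rcases Nat.eq_zero_or_pos m with rfl | hpos
      · exact Nat.zero_le _
      · exact hPm hpos.ne'
    · by_cases hK : m + 1 ≤ Multiset.card M
      · exact Nat.lt_succ_iff.1 (not_le.1 (hgt (Nat.lt_succ_self m) hK))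
      · exact (Multiset.countP_le_card _ M).trans (by omega)
  · rintro ⟨hPm, hsucc⟩
    refine ⟨hPm.trans (Multiset.countP_le_card _ M), fun _ ↦ hPm, fun k hk _ hPk ↦ ?_⟩
    have := countGE_antitone M (show m + 1 ≤ k by omega)
    omega

theorem countGE_topRows_of_le (R : Multiset ℕ) (hv : v ≤ m) : (topRows m R).countGE v = m := by
  rw [topRows, Multiset.countGE_map_Icc, filter_true_of_mem fun i _ ↦ by omega, Nat.card_Icc,
    Nat.add_sub_cancel]

theorem countGE_topRows_add (m : ℕ) (R : Multiset ℕ) (j : ℕ) :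
    (topRows m R).countGE (m + j) = conjugate m R.countGE j := by
  rw [topRows, Multiset.countGE_map_Icc, conjugate]
  simp only [Nat.add_le_add_iff_left]

theorem sum_topRows (hR : ∀ x ∈ R, x ≤ m) : (topRows m R).sum = m * m + R.sum := by
  rw [topRows, ← sum_eq_multiset_sum, sum_add_distrib, sum_const, Nat.card_Icc,
    Multiset.sum_countGE hR, smul_eq_mul, Nat.add_sub_cancel]

theorem zero_notMem_topRows_add (hB0 : 0 ∉ B) : 0 ∉ topRows m R + B := by
  rw [Multiset.mem_add, not_or]
  refine ⟨fun h ↦ ?_, hB0⟩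
  obtain ⟨i, hi, hi0⟩ := Multiset.mem_map.1 h
  have := mem_Icc.1 (mem_def.2 hi)
  omega

theorem le_of_mem_below (hx : x ∈ below m M) : x ≤ m := by
  rcases Multiset.mem_add.1 hx with hx | hx
  · exact (Multiset.of_mem_filter hx).le
  · exact (Multiset.eq_of_mem_replicate hx).le

theorem countGE_below (hm : m ≤ M.countGE m) (v : ℕ) :
    (below m M).countGE v = if v ≤ m then M.countGE v - m else 0 := by
  split_ifs with hv
  · rw [below, countGE_add, Multiset.countGE_filter_lt M hv, Multiset.countGE_replicate, if_pos hv]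
    have := countGE_antitone M hv
    omega
  · exact Multiset.countGE_eq_zero fun x hx ↦ (le_of_mem_below hx).trans_lt (not_le.1 hv)

theorem zero_notMem_below (h0 : 0 ∉ M) (hm : M.countGE (m + 1) ≤ m) : 0 ∉ below m M := by
  intro hx
  rcases Multiset.mem_add.1 hx with hx | hx
  · exact h0 (Multiset.mem_of_mem_filter hx)
  · -- here `m = 0`, and `M.countGE 0 = M.countGE 1 ≤ 0` as `M` has no zero parts
    obtain ⟨hne, rfl⟩ := Multiset.mem_replicate.1 hx
    have := Multiset.countGE_eq_countGE_succ_add_count M 0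
    rw [Multiset.count_eq_zero_of_notMem h0] at this
    omega

theorem countGE_rightConj (hv : 1 ≤ v) :
    (rightConj m M).countGE v = conjugate M.sum (fun k ↦ M.countGE (m + k)) v := by
  rw [rightConj, Multiset.countGE_filter_pos _ hv, Multiset.countGE_map_Icc, conjugate]

theorem mem_rightConj (hx : x ∈ rightConj m M) : 0 < x ∧ x ≤ M.countGE (m + 1) := by
  rw [rightConj, Multiset.mem_filter, Multiset.mem_map] at hx
  obtain ⟨⟨k, hk, rfl⟩, hpos⟩ := hx
  exact ⟨hpos, countGE_antitone M (by have := mem_Icc.1 (mem_def.2 hk); omega)⟩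

theorem topRows_rightConj_add_below (h0 : 0 ∉ M) (hm : size M = m) :
    topRows m (rightConj m M) + below m M = M := by
  obtain ⟨hmm, hsucc⟩ := size_eq_iff.1 hm
  refine Multiset.eq_of_countGE_eq (zero_notMem_topRows_add (zero_notMem_below h0 hsucc)) h0
    fun v hv ↦ ?_
  rw [countGE_add, countGE_below hmm]
  rcases le_or_gt v m with hvm | hvm
  · rw [countGE_topRows_of_le _ hvm, if_pos hvm]
    have := countGE_antitone M hvm
    omega
  -- right of the square, the counts of `M` come back by conjugating twice
  obtain ⟨j, hj, rfl⟩ : ∃ j, 1 ≤ j ∧ v = m + j := ⟨v - m, by omega, by omega⟩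
  have hvanish : ∀ k, M.sum < k → M.countGE (m + k) = 0 := fun k hk ↦
    Multiset.countGE_eq_zero fun x hx ↦ (Multiset.le_sum_of_mem hx).trans_lt (by omega)
  rw [countGE_topRows_add, if_neg (by omega), add_zero,
    conjugate_congr fun i hi ↦ countGE_rightConj (mem_Icc.1 hi).1,
    conjugate_conjugate (fun _ _ h ↦ countGE_antitone M (by omega)) hsucc hvanish hj]

theorem sum_eq_sq_add (h0 : 0 ∉ M) (hm : size M = m) :
    M.sum = m ^ 2 + (rightConj m M).sum + (below m M).sum := by
  have hR : ∀ x ∈ rightConj m M, x ≤ m := fun x hx ↦ (mem_rightConj hx).2.trans (size_eq_iff.1 hm).2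
  conv_lhs => rw [← topRows_rightConj_add_below h0 hm]
  rw [Multiset.sum_add, sum_topRows hR, sq]

theorem sq_size_le_sum (h0 : 0 ∉ M) : size M ^ 2 ≤ M.sum := by
  have := sum_eq_sq_add h0 rfl
  omega

theorem size_topRows_add (R : Multiset ℕ) (hB : ∀ x ∈ B, x ≤ m) : size (topRows m R + B) = m := by
  rw [size_eq_iff, countGE_add, countGE_add, countGE_topRows_of_le R le_rfl, countGE_topRows_add,
    Multiset.countGE_eq_zero fun x hx ↦ Nat.lt_succ_of_le (hB x hx)]
  exact ⟨Nat.le_add_right _ _, conjugate_le _ _ _⟩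

theorem below_topRows_add (R : Multiset ℕ) (hB0 : 0 ∉ B) (hB : ∀ x ∈ B, x ≤ m) :
    below m (topRows m R + B) = B := by
  obtain ⟨hmm, hsucc⟩ := size_eq_iff.1 (size_topRows_add R hB)
  refine Multiset.eq_of_countGE_eq (zero_notMem_below (zero_notMem_topRows_add hB0) hsucc) hB0
    fun v _ ↦ ?_
  rw [countGE_below hmm]
  split_ifs with hvm
  · rw [countGE_add, countGE_topRows_of_le R hvm, Nat.add_sub_cancel_left]
  · exact (Multiset.countGE_eq_zero fun x hx ↦ (hB x hx).trans_lt (not_le.1 hvm)).symm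

theorem rightConj_topRows_add (hR0 : 0 ∉ R) (hR : ∀ x ∈ R, x ≤ m) (hB : ∀ x ∈ B, x ≤ m) :
    rightConj m (topRows m R + B) = R := by
  set Q := topRows m R + B
  have hcard : R.countGE 1 ≤ Q.sum := calc
    R.countGE 1 ≤ Multiset.card R := Multiset.countP_le_card _ _
    _ ≤ R.sum := by
      simpa using Multiset.card_nsmul_le_sum (a := 1) fun x hx ↦
        Nat.pos_of_ne_zero fun h ↦ hR0 (h ▸ hx)
    _ ≤ Q.sum := by
      rw [Multiset.sum_add, sum_topRows hR]
      omega
  refine Multiset.eq_of_countGE_eq (fun h ↦ (mem_rightConj h).1.false) hR0 fun v hv ↦ ?_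
  have hshift : ∀ k ∈ Icc 1 Q.sum, Q.countGE (m + k) = conjugate m R.countGE k := fun k hk ↦ by
    rw [countGE_add, countGE_topRows_add, Multiset.countGE_eq_zero fun x hx ↦
      (hB x hx).trans_lt (by have := (mem_Icc.1 hk).1; omega), add_zero]
  rw [countGE_rightConj hv, conjugate_congr hshift,
    conjugate_conjugate (countGE_antitone R) hcard
      (fun i hi ↦ Multiset.countGE_eq_zero fun x hx ↦ (hR x hx).trans_lt hi) hv]

def boundedPairs (m d : ℕ) : Finset (Σ ab : ℕ × ℕ, ab.1.Partition × ab.2.Partition) :=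
  (antidiagonal d).sigma fun ab ↦ restricted ab.1 (· ≤ m) ×ˢ restricted ab.2 (· ≤ m)

theorem mem_boundedPairs {x : Σ ab : ℕ × ℕ, ab.1.Partition × ab.2.Partition} :
    x ∈ boundedPairs m d ↔
      x.1.1 + x.1.2 = d ∧ (∀ i ∈ x.2.1.parts, i ≤ m) ∧ ∀ i ∈ x.2.2.parts, i ≤ m := by
  simp [boundedPairs, restricted]

theorem card_boundedPairs (m d : ℕ) :
    #(boundedPairs m d) =
      ∑ ab ∈ antidiagonal d, #(restricted ab.1 (· ≤ m)) * #(restricted ab.2 (· ≤ m)) := by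
  simp_rw [boundedPairs, card_sigma, card_product]

theorem sum_topRows_add_of_mem_boundedPairs
    {x : Σ ab : ℕ × ℕ, ab.1.Partition × ab.2.Partition} (hx : x ∈ boundedPairs m d) :
    (topRows m x.2.2.parts + x.2.1.parts).sum = d + m ^ 2 := by
  obtain ⟨hab, -, hR⟩ := mem_boundedPairs.1 hx
  rw [Multiset.sum_add, sum_topRows hR, x.2.1.parts_sum, x.2.2.parts_sum, ← hab]
  ring

theorem card_filter_size_eq_card_boundedPairs (m d : ℕ) :
    #{P : (d + m ^ 2).Partition | size P.parts = m} = #(boundedPairs m d) := by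
  refine card_bij' (fun P _ ↦ ⟨((below m P.parts).sum, (rightConj m P.parts).sum),
      ofMultiset (below m P.parts), ofMultiset (rightConj m P.parts)⟩)
    (fun x hx ↦ ofSums _ _ (sum_topRows_add_of_mem_boundedPairs hx))
    (fun P hP ↦ ?_) (fun x hx ↦ ?_) (fun P hP ↦ ?_) (fun x hx ↦ ?_)
  · have hm := (mem_filter.1 hP).2
    have hsum := sum_eq_sq_add (zero_notMem_parts P) hm
    rw [P.parts_sum] at hsum
    refine mem_boundedPairs.2 ⟨by dsimp only; omega, fun i hi ↦ ?_, fun i hi ↦ ?_⟩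
    · exact le_of_mem_below (Multiset.mem_of_mem_filter hi)
    · exact (mem_rightConj (Multiset.mem_of_mem_filter hi)).2.trans (size_eq_iff.1 hm).2
  · obtain ⟨-, hB, -⟩ := mem_boundedPairs.1 hx
    rw [mem_filter, ofSums_parts,
      Multiset.filter_ne_zero_eq_self (zero_notMem_topRows_add (zero_notMem_parts _))]
    exact ⟨mem_univ _, size_topRows_add _ hB⟩
  · have hm := (mem_filter.1 hP).2
    have hB0 := zero_notMem_below (zero_notMem_parts P) (size_eq_iff.1 hm).2
    have hR0 : 0 ∉ rightConj m P.parts := fun h ↦ (mem_rightConj h).1.false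
    ext1
    rw [ofSums_parts, ofMultiset_parts, ofMultiset_parts, Multiset.filter_ne_zero_eq_self hR0,
      Multiset.filter_ne_zero_eq_self hB0,
      Multiset.filter_ne_zero_eq_self (zero_notMem_topRows_add hB0),
      topRows_rightConj_add_below (zero_notMem_parts P) hm]
  · obtain ⟨-, hB, hR⟩ := mem_boundedPairs.1 hx
    have hQ0 := zero_notMem_topRows_add (R := x.2.2.parts) (m := m) (zero_notMem_parts x.2.1)
    apply Nat.Partition.sigma_ext <;>
      simp only [ofMultiset_parts, ofSums_parts, Multiset.filter_ne_zero_eq_self hQ0]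
    · rw [below_topRows_add _ (zero_notMem_parts _) hB,
        Multiset.filter_ne_zero_eq_self (zero_notMem_parts _)]
    · rw [rightConj_topRows_add (zero_notMem_parts _) hR hB,
        Multiset.filter_ne_zero_eq_self (zero_notMem_parts _)]

end DurfeeSquare

open DurfeeSquare

section GeneratingFunction

open PowerSeries.WithPiTopology

theorem tsum_X_pow_mul_eq_oneMinusXInv {k : ℕ} (hk : k ≠ 0) :
    ∑' j, (X : ℤ⟦X⟧) ^ (k * j) = oneMinusXInv k := by
  have hgeom := tsum_pow_mul_one_sub_of_constantCoeff_eq_zero (f := (X : ℤ⟦X⟧) ^ k)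
    (by simp [hk])
  simp_rw [← pow_mul] at hgeom
  exact left_inv_eq_right_inv hgeom (mul_invOfUnit _ 1 (by simp [hk]))

theorem prod_oneMinusXInv_eq_mk_card_restricted (m : ℕ) :
    ∏ k ∈ Icc 1 m, oneMinusXInv k =
      PowerSeries.mk fun n ↦ (#(Nat.Partition.restricted n (· ≤ m)) : ℤ) := by
  refine HasProd.unique ?_ (Nat.Partition.hasProd_powerSeriesMk_card_restricted ℤ (· ≤ m))
  have hprod : ∏ k ∈ Icc 1 m, oneMinusXInv k =
      ∏ i ∈ range m, if i + 1 ≤ m then ∑' j, (X : ℤ⟦X⟧) ^ ((i + 1) * j) else 1 := by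
    have hshift : ∏ k ∈ Icc 1 m, oneMinusXInv k = ∏ i ∈ range m, oneMinusXInv (i + 1) := by
      rw [range_eq_Ico, prod_Ico_add', zero_add, Ico_add_one_right_eq_Icc]
    refine hshift.trans (prod_congr rfl fun i hi ↦ ?_)
    rw [if_pos (by simpa using hi), tsum_X_pow_mul_eq_oneMinusXInv i.succ_ne_zero]
  rw [hprod]
  exact hasProd_prod_of_ne_finset_one fun i hi ↦ if_neg (by simpa using hi)

end GeneratingFunction

theorem coeff_durfeeTerm_of_lt {m n : ℕ} (h : n < m ^ 2) : coeff n (durfeeTerm m) = 0 :=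
  PowerSeries.X_pow_dvd_iff.mp ⟨_, rfl⟩ n h

theorem coeff_durfeeTerm (m n : ℕ) :
    coeff n (durfeeTerm m) = #{P : n.Partition | size P.parts = m} := by
  rcases lt_or_ge n (m ^ 2) with h | h
  · rw [coeff_durfeeTerm_of_lt h, eq_comm, Nat.cast_eq_zero, card_eq_zero, filter_eq_empty_iff]
    intro P _ hP
    have := sq_size_le_sum (Nat.Partition.zero_notMem_parts P)
    rw [hP, P.parts_sum] at this
    omega
  obtain ⟨d, rfl⟩ := Nat.exists_eq_add_of_le' h
  rw [card_filter_size_eq_card_boundedPairs, card_boundedPairs, durfeeTerm, prod_pow,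
    prod_oneMinusXInv_eq_mk_card_restricted, sq (PowerSeries.mk _), coeff_X_pow_mul, coeff_mul]
  simp

theorem card_partition_eq_sum_card_filter_size (n : ℕ) :
    Fintype.card n.Partition = ∑ m ∈ range (n + 1), #{P : n.Partition | size P.parts = m} := by
  rw [← card_univ]
  refine card_eq_sum_card_fiberwise fun P _ ↦ mem_range.2 (Nat.lt_succ_of_le ?_)
  calc size P.parts ≤ size P.parts ^ 2 := Nat.le_self_pow two_ne_zero _
    _ ≤ P.parts.sum := sq_size_le_sum (Nat.Partition.zero_notMem_parts P)
    _ = n := P.parts_sum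

theorem partitionGF_eq_one_add_sum_durfeeTerms :
    (∀ m n : ℕ, n < m ^ 2 → (PowerSeries.coeff n) (durfeeTerm m) = 0) ∧
      ∀ n : ℕ, (PowerSeries.coeff n) partitionGF =
        ∑ m ∈ Finset.range (n + 1), (PowerSeries.coeff n) (durfeeTerm m) := by
  refine ⟨fun m n h ↦ coeff_durfeeTerm_of_lt h, fun n ↦ ?_⟩
  rw [partitionGF, coeff_mk, card_partition_eq_sum_card_filter_size, Nat.cast_sum]
  exact sum_congr rfl fun m _ ↦ (coeff_durfeeTerm m n).symm
end
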